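/- Let d = 4m + 2 for a positive integer m, and let S = {(0, 2i−1) : i = 1, …, ⌈d/4⌉} ∪ {(0,0), (d/2, 0), (d/2, d/2)} ⊆ ℤ/dℤ × ℤ/dℤ, a set of 3 + ⌈d/4⌉ pairs. Then there is no unit vector α ∈ ℂ^d such that the vectors X^a Z^b α for (a,b) ∈ S are pairwise orthogonal; that is, this set of 3 + ⌈d/4⌉ generalized Bell states in d⊗d is 1-LOCC indistinguishable, and hence f_GBS(d) ≤ 3 + ⌈d/4⌉. -/

import Mathlib

/-!
Let `s = d / 2`, which is odd. Up to a phase, `⟨U_{a,b} α, U_{a',b'} α⟩` is the discrete Fourier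
transform of `k ↦ conj (α k) * α (k + (a - a'))` at `b - b'`.

The differences of `0, 1, 3, …, s` exhaust `ZMod d`, so the pairs `(0, b)` force the Fourier
transform of `|α|²` to vanish off `0`: `|α|²` is constant and `α` vanishes nowhere.
The pairs `(0, b), (s, 0)` and `(0, b), (s, s)` make the transform of
`c k = conj (α k) * α (k - s)` vanish at `b` and `b - s`. As `2 s = 0`, `conj c` is a translate
of `c`, so this zero set is symmetric under negation, hence all of `ZMod d`. Thus `c = 0`,
while `c 0 ≠ 0`.
-/

open Complex

noncomputable def ω (d : ℕ) : ℂ := Complex.exp (2 * Real.pi * Complex.I / d)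

/-- The generalized Pauli operator `U_{m,n} = X^m Z^n` acting on `ℂ^d`
(coordinates indexed by `ZMod d`), where `X e_j = e_{j+1}` and `Z e_j = ω^j e_j`:
`(U_{m,n} α)_k = ω^{n (k-m)} α_{k-m}`. -/
noncomputable def pU (d : ℕ) [NeZero d] (m n : ZMod d) (α : ZMod d → ℂ) : ZMod d → ℂ :=
  fun k => ω d ^ (n.val * (k - m).val) * α (k - m)

noncomputable def ip (d : ℕ) [NeZero d] (α β : ZMod d → ℂ) : ℂ :=
  ∑ j : ZMod d, (starRingEnd ℂ) (α j) * β j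

open ZMod ComplexConjugate

namespace ZMod

lemma natCast_inj_of_lt {d a b : ℕ} (ha : a < d) (hb : b < d) : (a : ZMod d) = b ↔ a = b := by
  rw [natCast_eq_natCast_iff', Nat.mod_eq_of_lt ha, Nat.mod_eq_of_lt hb]

lemma natCast_half_ne_zero {d : ℕ} (hd : 2 ≤ d) : ((d / 2 : ℕ) : ZMod d) ≠ 0 := by
  rw [← Nat.cast_zero, Ne, natCast_inj_of_lt (by omega) (by omega)]
  omega

lemma natCast_half_add_self {d : ℕ} (hd : Even d) :
    ((d / 2 : ℕ) : ZMod d) + ((d / 2 : ℕ) : ZMod d) = 0 := by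
  rw [← Nat.cast_add, ← two_mul, Nat.two_mul_div_two_of_even hd, natCast_self]

variable {N : ℕ} [NeZero N]

lemma exists_natCast_eq_or_neg (x : ZMod N) :
    ∃ j ≤ N / 2, x = (j : ZMod N) ∨ x = -(j : ZMod N) := by
  have hx := coe_valMinAbs x
  have hle := natAbs_valMinAbs_le x
  obtain ⟨j, hj | hj⟩ := Int.eq_nat_or_neg x.valMinAbs <;>
    rw [hj] at hx hle <;> simp only [Int.natAbs_neg, Int.natAbs_natCast] at hle
  · exact ⟨j, hle, Or.inl (mod_cast hx.symm)⟩
  · exact ⟨j, hle, Or.inr (by simpa using hx.symm)⟩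

lemma eq_inv_mul_sum_of_dft_eq_zero {Φ : ZMod N → ℂ} (hΦ : ∀ j ≠ 0, 𝓕 Φ j = 0) (k : ZMod N) :
    Φ k = (N : ℂ)⁻¹ * ∑ j, Φ j := by
  rw [← dft_apply_zero, ← (𝓕 : (ZMod N → ℂ) ≃ₗ[ℂ] _).symm_apply_apply Φ, invDFT_apply,
    Finset.sum_eq_single 0 (fun j _ hj => by rw [hΦ j hj, smul_zero]) (by simp)]
  simp

lemma dft_neg_eq_zero_of_conj_eq_comp_add {Φ : ZMod N → ℂ} {t : ZMod N}
    (hΦ : ∀ k, conj (Φ k) = Φ (k + t)) {j : ZMod N} (hj : 𝓕 Φ j = 0) : 𝓕 Φ (-j) = 0 := by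
  have hconj : conj (𝓕 Φ j) = stdAddChar (-(t * j)) * 𝓕 Φ (-j) := by
    simp only [dft_apply, map_sum, smul_eq_mul, map_mul, ← AddChar.map_neg_eq_conj, neg_neg, hΦ,
      Finset.mul_sum]
    refine Fintype.sum_equiv (Equiv.addRight t) _ _ fun k => ?_
    rw [Equiv.coe_addRight, ← mul_assoc, ← AddChar.map_add_eq_mul]
    ring_nf
  rw [hj, map_zero, eq_comm, mul_eq_zero] at hconj
  exact hconj.resolve_left (Circle.coe_ne_zero _)

end ZMod

def lagProd {N : ℕ} (α : ZMod N → ℂ) (t k : ZMod N) : ℂ := conj (α k) * α (k + t)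

lemma conj_lagProd {N : ℕ} {α : ZMod N → ℂ} {t : ZMod N} (ht : t + t = 0) (k : ZMod N) :
    conj (lagProd α t k) = lagProd α t (k + t) := by
  simp [lagProd, add_assoc, ht, mul_comm]

section Pauli

variable {d : ℕ} [NeZero d]

lemma ω_pow (n : ℕ) : ω d ^ n = stdAddChar (n : ZMod d) := by
  rw [← Int.cast_natCast, stdAddChar_coe, ω, ← Complex.exp_nat_mul]
  push_cast
  ring_nf

lemma pU_apply (a b : ZMod d) (α : ZMod d → ℂ) (k : ZMod d) :
    pU d a b α k = stdAddChar (b * (k - a)) * α (k - a) := by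
  rw [pU, ω_pow]
  push_cast [natCast_zmod_val]
  rfl

lemma ip_pU_pU (a b a' b' : ZMod d) (α : ZMod d → ℂ) :
    ip d (pU d a b α) (pU d a' b' α) =
      stdAddChar (b' * (a - a')) * 𝓕 (lagProd α (a - a')) (b - b') := by
  simp only [ip, pU_apply, dft_apply, lagProd, smul_eq_mul, Finset.mul_sum]
  refine (Fintype.sum_equiv (Equiv.addRight a) _ _ fun k => ?_).symm
  simp only [Equiv.coe_addRight, add_sub_cancel_right, map_mul, ← AddChar.map_neg_eq_conj]
  rw [show k + a - a' = k + (a - a') by ring]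
  have phase : stdAddChar (b' * (a - a')) * stdAddChar (-(k * (b - b'))) =
      stdAddChar (-(b * k)) * stdAddChar (b' * (k + (a - a'))) := by
    rw [← AddChar.map_add_eq_mul, ← AddChar.map_add_eq_mul]
    ring_nf
  linear_combination (conj (α k) * α (k + (a - a'))) * phase

lemma ip_pU_pU_eq_zero_iff (a b a' b' : ZMod d) (α : ZMod d → ℂ) :
    ip d (pU d a b α) (pU d a' b' α) = 0 ↔ 𝓕 (lagProd α (a - a')) (b - b') = 0 := by
  rw [ip_pU_pU, mul_eq_zero]
  exact or_iff_right (Circle.coe_ne_zero _)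

lemma apply_ne_zero_of_dft_lagProd_zero {α : ZMod d → ℂ} (hα : ip d α α ≠ 0)
    (h : ∀ j ≠ 0, 𝓕 (lagProd α 0) j = 0) (k : ZMod d) : α k ≠ 0 := by
  intro hk
  have hflat := eq_inv_mul_sum_of_dft_eq_zero h k
  simp only [lagProd, add_zero, hk, map_zero, zero_mul] at hflat
  exact hα (by simpa [ip, NeZero.ne d] using hflat.symm)

end Pauli

/-- The `b` for which `(0, b)` lies in the set of the theorem: `0` and the odd numbers `≤ d / 2`. -/
def IsZIndex (d b : ℕ) : Prop := b = 0 ∨ (Odd b ∧ b ≤ d / 2)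

section Covering

variable {d : ℕ} [NeZero d]

lemma exists_isZIndex_sub (hd : d % 4 = 2) (x : ZMod d) :
    ∃ b b', IsZIndex d b ∧ IsZIndex d b' ∧ x = (b : ZMod d) - b' := by
  obtain ⟨j, hj, hx | hx⟩ := exists_natCast_eq_or_neg x <;>
    rcases Nat.even_or_odd j with ⟨i, rfl⟩ | hodd
  · refine ⟨i + i + 1, 1, Or.inr ⟨by simp, by omega⟩, Or.inr ⟨odd_one, by omega⟩, ?_⟩
    push_cast [hx]; ring
  · exact ⟨j, 0, Or.inr ⟨hodd, hj⟩, Or.inl rfl, by simpa using hx⟩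
  · refine ⟨1, i + i + 1, Or.inr ⟨odd_one, by omega⟩, Or.inr ⟨by simp, by omega⟩, ?_⟩
    push_cast [hx]; ring
  · exact ⟨0, j, Or.inl rfl, Or.inr ⟨hodd, hj⟩, by simpa using hx⟩

lemma exists_isZIndex_eq_or_sub_half (hd : d % 4 = 2) (x : ZMod d) :
    ∃ b, IsZIndex d b ∧ (x = b ∨ x = b - ((d / 2 : ℕ) : ZMod d) ∨
      -x = b ∨ -x = b - ((d / 2 : ℕ) : ZMod d)) := by
  obtain ⟨j, hj, hx | hx⟩ := exists_natCast_eq_or_neg x <;>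
    rcases Nat.even_or_odd j with hev | hodd
  · refine ⟨d / 2 - j, Or.inr ⟨Nat.odd_iff.mpr ?_, by omega⟩, Or.inr (Or.inr (Or.inr ?_))⟩
    · rw [Nat.even_iff] at hev; omega
    · rw [Nat.cast_sub hj, hx]; ring
  · exact ⟨j, Or.inr ⟨hodd, hj⟩, Or.inl hx⟩
  · refine ⟨d / 2 - j, Or.inr ⟨Nat.odd_iff.mpr ?_, by omega⟩, Or.inr (Or.inl ?_)⟩
    · rw [Nat.even_iff] at hev; omega
    · rw [Nat.cast_sub hj, hx]; ring
  · exact ⟨j, Or.inr ⟨hodd, hj⟩, Or.inr (Or.inr (Or.inl (by rw [hx, neg_neg])))⟩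

end Covering

theorem not_pairwise_orthogonal_pU {d : ℕ} [NeZero d] (hd : d % 4 = 2)
    {S : Finset (ZMod d × ZMod d)} (hZ : ∀ b, IsZIndex d b → ((0 : ZMod d), (b : ZMod d)) ∈ S)
    (hs0 : (((d / 2 : ℕ) : ZMod d), 0) ∈ S)
    (hss : (((d / 2 : ℕ) : ZMod d), ((d / 2 : ℕ) : ZMod d)) ∈ S)
    {α : ZMod d → ℂ} (hα : ip d α α ≠ 0) :
    ¬ ∀ p ∈ S, ∀ q ∈ S, p ≠ q → ip d (pU d p.1 p.2 α) (pU d q.1 q.2 α) = 0 := by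
  intro horth
  set s : ZMod d := ((d / 2 : ℕ) : ZMod d)
  have hs : s ≠ 0 := natCast_half_ne_zero (by omega)
  have hsym : ∀ k, conj (lagProd α (-s) k) = lagProd α (-s) (k + -s) := by
    refine conj_lagProd ?_
    rw [← neg_add, natCast_half_add_self (Nat.even_iff.mpr (by omega)), neg_zero]
  have hα0 : ∀ k, α k ≠ 0 := by
    refine apply_ne_zero_of_dft_lagProd_zero hα fun j hj => ?_
    obtain ⟨b, b', hb, hb', rfl⟩ := exists_isZIndex_sub hd j
    have := horth _ (hZ b hb) _ (hZ b' hb') (by simpa [sub_eq_zero] using hj)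
    simpa [ip_pU_pU_eq_zero_iff] using this
  have hzero : ∀ b, IsZIndex d b →
      𝓕 (lagProd α (-s)) b = 0 ∧ 𝓕 (lagProd α (-s)) (b - s) = 0 := by
    intro b hb
    have horth0 := horth _ (hZ b hb) _ hs0 (by simp [hs.symm])
    have horths := horth _ (hZ b hb) _ hss (by simp [hs.symm])
    simp only [ip_pU_pU_eq_zero_iff, zero_sub, sub_zero] at horth0 horths
    exact ⟨horth0, horths⟩
  have hdft : ∀ j, 𝓕 (lagProd α (-s)) j = 0 := by
    intro j
    obtain ⟨b, hb, h | h | h | h⟩ := exists_isZIndex_eq_or_sub_half hd j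
    · exact h ▸ (hzero b hb).1
    · exact h ▸ (hzero b hb).2
    · rw [← neg_neg j, h]; exact dft_neg_eq_zero_of_conj_eq_comp_add hsym (hzero b hb).1
    · rw [← neg_neg j, h]; exact dft_neg_eq_zero_of_conj_eq_comp_add hsym (hzero b hb).2
  have hlag := congrFun (dft.map_eq_zero_iff.mp (funext hdft)) 0
  exact mul_ne_zero ((map_ne_zero _).mpr (hα0 0)) (hα0 _) hlag

def bellSet (d : ℕ) : Finset (ZMod d × ZMod d) :=
  (Finset.Icc 1 ⌈(d : ℚ) / 4⌉₊).image (fun i : ℕ => ((0 : ZMod d), ((2 * i - 1 : ℕ) : ZMod d))) ∪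
    {(0, 0), (((d / 2 : ℕ) : ZMod d), 0), (((d / 2 : ℕ) : ZMod d), ((d / 2 : ℕ) : ZMod d))}

section BellSet

variable {d : ℕ}

lemma ceil_div_four (hd : d % 4 = 2) : ⌈(d : ℚ) / 4⌉₊ = d / 4 + 1 := by
  rw [Nat.ceil_eq_iff (by omega)]
  obtain ⟨q, rfl⟩ : ∃ q, d = 4 * q + 2 := ⟨d / 4, by omega⟩
  rw [show (4 * q + 2) / 4 = q by omega]
  push_cast
  constructor <;> linarith

lemma mem_bellSet_of_isZIndex (hd : d % 4 = 2) {b : ℕ} (hb : IsZIndex d b) :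
    ((0 : ZMod d), (b : ZMod d)) ∈ bellSet d := by
  rcases hb with rfl | ⟨⟨i, rfl⟩, hb⟩
  · simp [bellSet]
  · refine Finset.mem_union_left _ (Finset.mem_image.mpr ⟨i + 1, ?_, ?_⟩)
    · rw [Finset.mem_Icc, ceil_div_four hd]
      omega
    · rw [show 2 * (i + 1) - 1 = 2 * i + 1 by omega]

lemma card_bellSet (hd : d % 4 = 2) : (bellSet d).card = 3 + ⌈(d : ℚ) / 4⌉₊ := by
  have hs : ((d / 2 : ℕ) : ZMod d) ≠ 0 := natCast_half_ne_zero (by omega)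
  have hinj : Set.InjOn (fun i : ℕ => ((0 : ZMod d), ((2 * i - 1 : ℕ) : ZMod d)))
      (Finset.Icc 1 ⌈(d : ℚ) / 4⌉₊) := by
    intro i hi j hj hij
    simp only [Finset.coe_Icc, Set.mem_Icc, ceil_div_four hd, Prod.mk.injEq, true_and] at hi hj hij
    rw [natCast_inj_of_lt (by omega) (by omega)] at hij
    omega
  rw [bellSet, Finset.card_union_of_disjoint, Finset.card_image_of_injOn hinj, Nat.card_Icc]
  · rw [Finset.card_insert_of_notMem (by simp [hs.symm]), Finset.card_pair (by simp [hs.symm])]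
    omega
  · simp only [Finset.disjoint_left, Finset.mem_image, Finset.mem_Icc, ceil_div_four hd,
      Finset.mem_insert, Finset.mem_singleton, not_or]
    rintro _ ⟨i, hi, rfl⟩
    refine ⟨?_, by simp [hs.symm], by simp [hs.symm]⟩
    simp only [Prod.mk.injEq, true_and, ← Nat.cast_zero (R := ZMod d)]
    rw [natCast_inj_of_lt (by omega) (by omega)]
    omega

end BellSet

theorem stmt_16_general (m : ℕ) (d : ℕ) [NeZero d] (hd : d = 4 * m + 2) :
    ∃ S : Finset (ZMod d × ZMod d),
      S = (Finset.Icc 1 ⌈(d : ℚ) / 4⌉₊).image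
              (fun i : ℕ => ((0 : ZMod d), ((2 * i - 1 : ℕ) : ZMod d))) ∪
            ({((0 : ZMod d), (0 : ZMod d)),
              ((((d / 2 : ℕ) : ZMod d)), (0 : ZMod d)),
              ((((d / 2 : ℕ) : ZMod d)), (((d / 2 : ℕ) : ZMod d)))} :
              Finset (ZMod d × ZMod d)) ∧
      S.card = 3 + ⌈(d : ℚ) / 4⌉₊ ∧
      ¬ ∃ α : ZMod d → ℂ, ip d α α = 1 ∧
        ∀ p ∈ S, ∀ q ∈ S, p ≠ q → ip d (pU d p.1 p.2 α) (pU d q.1 q.2 α) = 0 := by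
  have hd4 : d % 4 = 2 := by omega
  refine ⟨bellSet d, rfl, card_bellSet hd4, ?_⟩
  rintro ⟨α, hα, horth⟩
  exact not_pairwise_orthogonal_pU hd4 (fun _ hb => mem_bellSet_of_isZIndex hd4 hb)
    (by simp [bellSet]) (by simp [bellSet]) (by simp [hα]) horth

/-- (Theorem 4(2) of the paper.) For `d = 4m + 2` (`m ≥ 1`), the set
`S = {(0, 2i-1) : i = 1,…,⌈d/4⌉} ∪ {(0,0), (d/2,0), (d/2, d/2)}` of
`3 + ⌈d/4⌉` generalized Bell states is 1-LOCC indistinguishable: there is no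
unit vector `α ∈ ℂ^d` for which the vectors `X^a Z^b α`, `(a,b) ∈ S`, are
pairwise orthogonal. Hence `f_GBS(d) ≤ 3 + ⌈d/4⌉`. -/
theorem stmt_16 (m : ℕ) (hm : 1 ≤ m) (d : ℕ) [NeZero d] (hd : d = 4 * m + 2) :
    ∃ S : Finset (ZMod d × ZMod d),
      S = (Finset.Icc 1 ⌈(d : ℚ) / 4⌉₊).image
              (fun i : ℕ => ((0 : ZMod d), ((2 * i - 1 : ℕ) : ZMod d))) ∪
            ({((0 : ZMod d), (0 : ZMod d)),
              ((((d / 2 : ℕ) : ZMod d)), (0 : ZMod d)),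
              ((((d / 2 : ℕ) : ZMod d)), (((d / 2 : ℕ) : ZMod d)))} :
              Finset (ZMod d × ZMod d)) ∧
      S.card = 3 + ⌈(d : ℚ) / 4⌉₊ ∧
      ¬ ∃ α : ZMod d → ℂ, ip d α α = 1 ∧
        ∀ p ∈ S, ∀ q ∈ S, p ≠ q → ip d (pU d p.1 p.2 α) (pU d q.1 q.2 α) = 0 :=
  stmt_16_general m d hd
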